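/- Let τ: A → 𝔄 be an 𝔄-trace, with non degenerate action. Then (i) π_τ^op(A^op) ⊆ π_τ(A)' in B(L²(A,τ)); and (ii) there is a conjugate-linear 𝔄-morphism J: L²(A,τ) → L²(A,τ) (i.e. J(α·z) = J(z)·α* and J(z·α) = α*·J(z)) with J² = id, satisfying J(â) = (a*)^ and J π_τ(a) J = π_τ^op(a*) for all a ∈ A, and ⟨Jz, z'⟩ = ⟨Jz', z⟩ for all z, z' ∈ L²(A,τ). -/

import Mathlib

open Filter Topology

noncomputable section

/-- A positive element of a `*`-ring: one of the form `star b * b`. -/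
def IsPosElem {R : Type} [Mul R] [Star R] (x : R) : Prop := ∃ b : R, x = star b * b

/-- Positivity for an `n × n` matrix over a `*`-ring, phrased entrywise:
`M = star b * b` for some rectangular matrix `b`. -/
def MatPos {R : Type} [AddCommMonoid R] [Mul R] [Star R] {n : ℕ}
    (M : Fin n → Fin n → R) : Prop :=
  ∃ (m : ℕ) (b : Fin m → Fin n → R), ∀ i j, M i j = ∑ k, star (b k i) * b k j

/-- A map between `*`-rings is completely positive if all its amplifications map
positive matrices to positive matrices. -/
def IsCPMap {R Z : Type} [AddCommMonoid R] [Mul R] [Star R]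
    [AddCommMonoid Z] [Mul Z] [Star Z] (φ : R → Z) : Prop :=
  ∀ (n : ℕ) (M : Fin n → Fin n → R), MatPos M → MatPos (fun i j => φ (M i j))

variable (𝔄 A : Type) [NonUnitalCStarAlgebra 𝔄] [NonUnitalCStarAlgebra A]

/-- A compatible right Banach `𝔄`-module structure on the C*-algebra `A`,
making `A` an `𝔄`-C*-module. -/
structure CStarAction where
  act : A → 𝔄 → A
  act_add : ∀ (a : A) (α β : 𝔄), act a (α + β) = act a α + act a β
  add_act : ∀ (a b : A) (α : 𝔄), act (a + b) α = act a α + act b α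
  act_smulC : ∀ (c : ℂ) (a : A) (α : 𝔄), act a (c • α) = c • act a α
  smulC_act : ∀ (c : ℂ) (a : A) (α : 𝔄), act (c • a) α = c • act a α
  norm_act : ∀ (a : A) (α : 𝔄), ‖act a α‖ ≤ ‖a‖ * ‖α‖
  mul_act : ∀ (a b : A) (α : 𝔄), act (a * b) α = a * act b α
  act_mul : ∀ (a : A) (α β : 𝔄), act a (α * β) = act (act a α) β
  star_compat : ∀ (a : A) (α β : 𝔄),
    act (star (act (star a) (star α))) β = star (act (star (act a β)) (star α))

variable {𝔄 A}

/-- The associated left action `α • a := (a* • α*)*`. -/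
def CStarAction.lact (S : CStarAction 𝔄 A) (α : 𝔄) (a : A) : A :=
  star (S.act (star a) (star α))

/-- The action is non degenerate if `a • α = 0` for all `a` forces `α = 0`. -/
def CStarAction.NonDegenerate (S : CStarAction 𝔄 A) : Prop :=
  ∀ α : 𝔄, (∀ a : A, S.act a α = 0) → α = 0

/-- The two-sided action is a biaction: `(a • α) b = a (α • b)`. -/
def CStarAction.Biaction (S : CStarAction 𝔄 A) : Prop :=
  ∀ (a : A) (α : 𝔄) (b : A), S.act a α * b = a * S.lact α b

/-- An `𝔄`-retraction: a positive right `𝔄`-module map `τ : A → 𝔄` with strictly dense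
image such that `τ` sends some bounded approximate identity of `A` strictly to a
projection `p` of `𝔄`.  (Nets are encoded by filters.) -/
structure IsRetraction (S : CStarAction 𝔄 A) (τ : A → 𝔄) : Prop where
  map_add : ∀ a b : A, τ (a + b) = τ a + τ b
  map_smulC : ∀ (c : ℂ) (a : A), τ (c • a) = c • τ a
  pos : ∀ a : A, IsPosElem (τ (star a * a))
  map_act : ∀ (a : A) (α : 𝔄), τ (S.act a α) = τ a * α
  strict_dense : ∀ (β : 𝔄) (ε : ℝ), 0 < ε → ∀ s : Finset 𝔄,
    ∃ a : A, ∀ α ∈ s, ‖τ (S.act a α) - β * α‖ < ε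
  bai : ∃ (l : Filter A) (p : 𝔄), l.NeBot ∧ (∃ C : ℝ, ∀ᶠ e in l, ‖e‖ ≤ C) ∧
    (∀ a : A, Tendsto (fun e => e * a) l (𝓝 a)) ∧
    (∀ a : A, Tendsto (fun e => a * e) l (𝓝 a)) ∧
    star p = p ∧ p * p = p ∧
    (∀ α : 𝔄, Tendsto (fun e => τ e * α) l (𝓝 (p * α))) ∧
    (∀ α : 𝔄, Tendsto (fun e => α * τ e) l (𝓝 (α * p)))

/-- An `𝔄`-trace: a tracial `𝔄`-retraction. -/
structure IsATrace (S : CStarAction 𝔄 A) (τ : A → 𝔄) extends IsRetraction S τ : Prop where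
  tracial : ∀ a b : A, τ (a * b) = τ (b * a)

/-! ### Hilbert C*-modules, adjointable operators, correspondences -/

variable (𝔄 : Type) [NonUnitalCStarAlgebra 𝔄]

/-- A (right) Hilbert `𝔄`-module structure on a complete normed space `X`. -/
structure HilbertModuleStr (X : Type) [NormedAddCommGroup X] [NormedSpace ℂ X]
    [CompleteSpace X] where
  smul : X → 𝔄 → X
  add_smul : ∀ (x y : X) (α : 𝔄), smul (x + y) α = smul x α + smul y α
  smul_add : ∀ (x : X) (α β : 𝔄), smul x (α + β) = smul x α + smul x β
  smulC_smul : ∀ (c : ℂ) (x : X) (α : 𝔄), smul (c • x) α = c • smul x α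
  smul_smulC : ∀ (c : ℂ) (x : X) (α : 𝔄), smul x (c • α) = c • smul x α
  smul_mul : ∀ (x : X) (α β : 𝔄), smul x (α * β) = smul (smul x α) β
  inner : X → X → 𝔄
  inner_add_left : ∀ x y z : X, inner (x + y) z = inner x z + inner y z
  inner_add_right : ∀ x y z : X, inner x (y + z) = inner x y + inner x z
  inner_smulC_right : ∀ (c : ℂ) (x y : X), inner x (c • y) = c • inner x y
  inner_smulC_left : ∀ (c : ℂ) (x y : X), inner (c • x) y = (starRingEnd ℂ c) • inner x y
  inner_smul_right : ∀ (x y : X) (α : 𝔄), inner x (smul y α) = inner x y * α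
  inner_star : ∀ x y : X, star (inner x y) = inner y x
  inner_pos : ∀ x : X, IsPosElem (inner x x)
  norm_inner : ∀ x : X, ‖x‖ ^ 2 = ‖inner x x‖

variable {𝔄}
variable {X : Type} [NormedAddCommGroup X] [NormedSpace ℂ X] [CompleteSpace X]

namespace HilbertModuleStr

variable (H : HilbertModuleStr 𝔄 X)

theorem inner_smul_left (x y : X) (α : 𝔄) :
    H.inner (H.smul x α) y = star α * H.inner x y := by
  rw [← H.inner_star, H.inner_smul_right, star_mul, H.inner_star]

theorem inner_zero_left (y : X) : H.inner 0 y = 0 := by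
  have h := H.inner_add_left 0 0 y
  rw [add_zero] at h
  exact add_left_cancel (h.symm.trans (add_zero _).symm)

theorem inner_zero_right (x : X) : H.inner x 0 = 0 := by
  rw [← H.inner_star, H.inner_zero_left, star_zero]

theorem inner_neg_left (x y : X) : H.inner (-x) y = -H.inner x y := by
  have : (-x : X) = ((-1 : ℂ) • x) := by simp
  rw [this, H.inner_smulC_left]; simp

theorem inner_neg_right (x y : X) : H.inner x (-y) = -H.inner x y := by
  have : (-y : X) = ((-1 : ℂ) • y) := by simp
  rw [this, H.inner_smulC_right]; simp

theorem inner_sub_left (x y z : X) : H.inner (x - y) z = H.inner x z - H.inner y z := by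
  rw [sub_eq_add_neg, H.inner_add_left, H.inner_neg_left, sub_eq_add_neg]

theorem inner_sub_right (x y z : X) : H.inner x (y - z) = H.inner x y - H.inner x z := by
  rw [sub_eq_add_neg, H.inner_add_right, H.inner_neg_right, sub_eq_add_neg]

end HilbertModuleStr

/-- A bounded adjointable operator on a Hilbert `𝔄`-module. -/
structure Adj (H : HilbertModuleStr 𝔄 X) where
  toFun : X → X
  adjFun : X → X
  inner_adj : ∀ x y : X, H.inner (toFun x) y = H.inner x (adjFun y)

namespace Adj

variable {H : HilbertModuleStr 𝔄 X}

theorem ext' {S T : Adj H} (h1 : S.toFun = T.toFun) (h2 : S.adjFun = T.adjFun) : S = T := by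
  cases S; cases T; simp_all

instance : Add (Adj H) :=
  ⟨fun S T =>
    { toFun := fun x => S.toFun x + T.toFun x
      adjFun := fun x => S.adjFun x + T.adjFun x
      inner_adj := fun x y => by
        rw [H.inner_add_left, H.inner_add_right, S.inner_adj, T.inner_adj] }⟩

instance : Zero (Adj H) :=
  ⟨{ toFun := fun _ => 0
     adjFun := fun _ => 0
     inner_adj := fun x y => by rw [H.inner_zero_left, H.inner_zero_right] }⟩

instance : Neg (Adj H) :=
  ⟨fun S =>
    { toFun := fun x => -S.toFun x
      adjFun := fun x => -S.adjFun x
      inner_adj := fun x y => by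
        rw [H.inner_neg_left, H.inner_neg_right, S.inner_adj] }⟩

instance : Sub (Adj H) :=
  ⟨fun S T =>
    { toFun := fun x => S.toFun x - T.toFun x
      adjFun := fun x => S.adjFun x - T.adjFun x
      inner_adj := fun x y => by
        rw [H.inner_sub_left, H.inner_sub_right, S.inner_adj, T.inner_adj] }⟩

instance : SMul ℂ (Adj H) :=
  ⟨fun c S =>
    { toFun := fun x => c • S.toFun x
      adjFun := fun x => (starRingEnd ℂ c) • S.adjFun x
      inner_adj := fun x y => by
        rw [H.inner_smulC_left, H.inner_smulC_right, S.inner_adj] }⟩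

instance : Mul (Adj H) :=
  ⟨fun S T =>
    { toFun := fun x => S.toFun (T.toFun x)
      adjFun := fun x => T.adjFun (S.adjFun x)
      inner_adj := fun x y => by rw [S.inner_adj, T.inner_adj] }⟩

instance : One (Adj H) :=
  ⟨{ toFun := id
     adjFun := id
     inner_adj := fun _ _ => rfl }⟩

instance : Star (Adj H) :=
  ⟨fun S =>
    { toFun := S.adjFun
      adjFun := S.toFun
      inner_adj := fun x y =>
        calc H.inner (S.adjFun x) y = star (H.inner y (S.adjFun x)) := (H.inner_star _ _).symm
          _ = star (H.inner (S.toFun y) x) := by rw [S.inner_adj]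
          _ = H.inner x (S.toFun y) := H.inner_star _ _ }⟩

@[simp] theorem add_toFun (S T : Adj H) (x : X) : (S + T).toFun x = S.toFun x + T.toFun x := rfl
@[simp] theorem add_adjFun (S T : Adj H) (x : X) :
    (S + T).adjFun x = S.adjFun x + T.adjFun x := rfl
@[simp] theorem zero_toFun (x : X) : (0 : Adj H).toFun x = 0 := rfl
@[simp] theorem zero_adjFun (x : X) : (0 : Adj H).adjFun x = 0 := rfl

instance : AddCommMonoid (Adj H) where
  add_assoc S T U := ext' (funext fun x => add_assoc _ _ _) (funext fun x => add_assoc _ _ _)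
  zero_add S := ext' (funext fun x => zero_add _) (funext fun x => zero_add _)
  add_zero S := ext' (funext fun x => add_zero _) (funext fun x => add_zero _)
  add_comm S T := ext' (funext fun x => add_comm _ _) (funext fun x => add_comm _ _)
  nsmul := nsmulRec

/-- The operator norm of a (automatically bounded) adjointable operator. -/
noncomputable instance : Norm (Adj H) := ⟨fun T => ⨆ x : X, ‖T.toFun x‖ / ‖x‖⟩

end Adj

/-- The commutant of a set of adjointable operators. -/
def Commutant {H : HilbertModuleStr 𝔄 X} (Ω : Set (Adj H)) : Set (Adj H) :=
  {T | ∀ U ∈ Ω, T * U = U * T}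

/-! ### Correspondences, representations, c.c.p. module maps -/

variable (𝔄) in
/-- An `𝔄`-correspondence: a right Hilbert `𝔄`-module together with a left action of `𝔄`
by adjointable operators. -/
structure CorrStr (X : Type) [NormedAddCommGroup X] [NormedSpace ℂ X] [CompleteSpace X]
    extends HilbertModuleStr 𝔄 X where
  lsmul : 𝔄 → X → X
  lsmul_adj : ∀ (α : 𝔄) (x y : X),
    toHilbertModuleStr.inner (lsmul α x) y = toHilbertModuleStr.inner x (lsmul (star α) y)
  add_lsmul : ∀ (α β : 𝔄) (x : X), lsmul (α + β) x = lsmul α x + lsmul β x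
  smulC_lsmul : ∀ (c : ℂ) (α : 𝔄) (x : X), lsmul (c • α) x = c • lsmul α x
  mul_lsmul : ∀ (α β : 𝔄) (x : X), lsmul (α * β) x = lsmul α (lsmul β x)

namespace CorrStr

variable {X : Type} [NormedAddCommGroup X] [NormedSpace ℂ X] [CompleteSpace X]
variable (C : CorrStr 𝔄 X)

/-- The left action of `α ∈ 𝔄` as an adjointable operator. -/
def lactAdj (α : 𝔄) : Adj C.toHilbertModuleStr :=
  { toFun := C.lsmul α
    adjFun := C.lsmul (star α)
    inner_adj := fun x y => C.lsmul_adj α x y }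

/-- The canonical right `𝔄`-module structure on the adjointable operators of a
correspondence: `(T • α) x = T (α • x)`. -/
def ract (T : Adj C.toHilbertModuleStr) (α : 𝔄) : Adj C.toHilbertModuleStr :=
  T * C.lactAdj α

end CorrStr

variable (𝔄) in
/-- A representation of the `𝔄`-C*-module `A` in an `𝔄`-correspondence: a `*`-homomorphism
into the adjointable operators which is also a right `𝔄`-module map. -/
structure RepC {A : Type} [NonUnitalCStarAlgebra A] (S : CStarAction 𝔄 A)
    {X : Type} [NormedAddCommGroup X] [NormedSpace ℂ X] [CompleteSpace X]
    (C : CorrStr 𝔄 X) where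
  ρ : A → Adj C.toHilbertModuleStr
  map_add : ∀ a b : A, ρ (a + b) = ρ a + ρ b
  map_smulC : ∀ (c : ℂ) (a : A), ρ (c • a) = c • ρ a
  map_mul : ∀ a b : A, ρ (a * b) = ρ a * ρ b
  map_star : ∀ a : A, ρ (star a) = star (ρ a)
  map_act : ∀ (a : A) (α : 𝔄), ρ (S.act a α) = C.ract (ρ a) α

variable (𝔄) in
/-- A bundled `𝔄`-correspondence. -/
structure BCorr where
  X : Type
  [iN : NormedAddCommGroup X]
  [iS : NormedSpace ℂ X]
  [iC : CompleteSpace X]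
  corr : CorrStr 𝔄 X

attribute [instance] BCorr.iN BCorr.iS BCorr.iC

section CCP

variable {X : Type} [NormedAddCommGroup X] [NormedSpace ℂ X] [CompleteSpace X]

/-- A contractive completely positive right `𝔄`-module map from the adjointable operators
of an `𝔄`-correspondence into a normed `*`-object `Z` with a right `𝔄`-action. -/
structure IsCCPModMap (C : CorrStr 𝔄 X) {Z : Type} [AddCommMonoid Z] [Mul Z] [Star Z]
    [Norm Z] [SMul ℂ Z] (actZ : Z → 𝔄 → Z) (φ : Adj C.toHilbertModuleStr → Z) : Prop where
  map_add : ∀ S T, φ (S + T) = φ S + φ T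
  map_smulC : ∀ (c : ℂ) (T), φ (c • T) = c • φ T
  cp : IsCPMap φ
  contractive : ∀ T, ‖φ T‖ ≤ ‖T‖
  map_ract : ∀ (T) (α : 𝔄), φ (C.ract T α) = actZ (φ T) α

end CCP

/-- An amenable `𝔄`-trace: for every faithful representation of `A` in an
`𝔄`-correspondence `Y`, the trace `τ` extends to a c.c.p. right module map
`φ : B(Y) → 𝔄` which is invariant under conjugation by unitaries in `A + ℂ I`. -/
def IsAmenableTrace {A : Type} [NonUnitalCStarAlgebra A] (S : CStarAction 𝔄 A)
    (τ : A → 𝔄) : Prop :=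
  IsATrace S τ ∧
    ∀ (Y : BCorr 𝔄) (π : RepC 𝔄 S Y.corr), Function.Injective π.ρ →
      ∃ φ : Adj Y.corr.toHilbertModuleStr → 𝔄,
        IsCCPModMap Y.corr (fun z α => z * α) φ ∧
        (∀ a : A, φ (π.ρ a) = τ a) ∧
        (∀ (a : A) (c : ℂ),
          (star (π.ρ a + c • 1) * (π.ρ a + c • 1) = 1 ∧
            (π.ρ a + c • 1) * star (π.ρ a + c • 1) = 1) →
          ∀ T, φ ((π.ρ a + c • 1) * T * star (π.ρ a + c • 1)) = φ T)

/-! ### A model of the GNS construction `L²(A, τ)` for an `𝔄`-trace -/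

variable {A : Type} [NonUnitalCStarAlgebra A]
variable {X : Type} [NormedAddCommGroup X] [NormedSpace ℂ X] [CompleteSpace X]

variable (𝔄 X) in
/-- A realization of the Hilbert `𝔄`-module `L²(A, τ)` together with the canonical map
`a ↦ â`, the left/right regular representations and the left `𝔄`-action. -/
structure GNSModel (S : CStarAction 𝔄 A) (τ : A → 𝔄) where
  toH : HilbertModuleStr 𝔄 X
  hat : A → X
  hat_add : ∀ a b : A, hat (a + b) = hat a + hat b
  hat_smulC : ∀ (c : ℂ) (a : A), hat (c • a) = c • hat a
  hat_act : ∀ (a : A) (α : 𝔄), hat (S.act a α) = toH.smul (hat a) α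
  inner_hat : ∀ a b : A, toH.inner (hat a) (hat b) = τ (star a * b)
  dense_hat : DenseRange hat
  lreg : A → Adj toH
  lreg_spec : ∀ a b : A, (lreg a).toFun (hat b) = hat (a * b)
  rreg : A → Adj toH
  rreg_spec : ∀ a b : A, (rreg a).toFun (hat b) = hat (b * a)
  lact : 𝔄 → X → X
  lact_hat : ∀ (α : 𝔄) (a : A), lact α (hat a) = hat (S.lact α a)
  lact_adj : ∀ (α : 𝔄) (x y : X), toH.inner (lact α x) y = toH.inner x (lact (star α) y)

variable (𝔄 X) in
/-- A `GNSModel` together with the canonical cyclic vector `1̂ = lim êᵢ`. -/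
structure GNSModelOne (S : CStarAction 𝔄 A) (τ : A → 𝔄) extends GNSModel 𝔄 X S τ where
  one : X
  lreg_one : ∀ a : A, (lreg a).toFun one = hat a
  rreg_one : ∀ a : A, (rreg a).toFun one = hat a

namespace GNSModel

variable {S : CStarAction 𝔄 A} {τ : A → 𝔄}

/-- The left `𝔄`-action of a GNS model as an adjointable operator. -/
def lactAdj (M : GNSModel 𝔄 X S τ) (α : 𝔄) : Adj M.toH :=
  { toFun := M.lact α
    adjFun := M.lact (star α)
    inner_adj := fun x y => M.lact_adj α x y }

/-- The right `𝔄`-module structure on `B(L²(A,τ))`. -/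
def ract (M : GNSModel 𝔄 X S τ) (T : Adj M.toH) (α : 𝔄) : Adj M.toH :=
  T * M.lactAdj α

end GNSModel

/-!
The map `â ↦ (a*)^` is isometric because `τ` is tracial: `‖(a*)^‖² = ‖τ(a a*)‖ = ‖τ(a* a)‖ = ‖â‖²`.
It therefore extends by continuity to a conjugation `J` of `L²(A,τ)`, and every identity in the
theorem holds because it holds on the dense set of vectors `â`, where it reduces to the algebra
of `A` and to `τ(ab) = τ(ba)`; both sides are continuous, adjointable operators by the closed
graph theorem and inner products by Cauchy–Schwarz. The right regular representation commutes
with the left one already on vectors `ĉ`, by associativity of `A`.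
-/

theorem DenseRange.exists_continuous_extend_of_dist_le {α X Y : Type*} [PseudoMetricSpace X]
    [MetricSpace Y] [CompleteSpace Y] {h : α → X} (hh : DenseRange h) {g : α → Y}
    (hg : ∀ a b, dist (g a) (g b) ≤ dist (h a) (h b)) :
    ∃ F : X → Y, Continuous F ∧ ∀ a, F (h a) = g a := by
  have hwd : ∀ a b, h a = h b → g a = g b := fun a b hab =>
    dist_le_zero.1 ((hg a b).trans (by rw [hab, dist_self]))
  let f : Set.range h → Y := fun d => g d.2.choose
  have hf : ∀ a, f ⟨h a, a, rfl⟩ = g a := fun a =>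
    hwd _ a (⟨h a, a, rfl⟩ : Set.range h).2.choose_spec
  have hfu : UniformContinuous f := by
    refine (LipschitzWith.of_dist_le_mul (K := 1) ?_).uniformContinuous
    rintro ⟨_, a, rfl⟩ ⟨_, b, rfl⟩
    simpa [hf, Subtype.dist_eq] using hg a b
  have hui : IsUniformInducing ((↑) : Set.range h → X) :=
    isUniformEmbedding_subtype_val.isUniformInducing
  have hde : DenseRange ((↑) : Set.range h → X) := hh.denseRange_val
  refine ⟨(hui.isDenseInducing hde).extend f,
    (uniformContinuous_uniformly_extend hui hde hfu).continuous, fun a => ?_⟩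
  rw [← hf a]
  exact uniformly_extend_of_ind hui hde hfu ⟨h a, a, rfl⟩

variable {𝔄 : Type} [NonUnitalCStarAlgebra 𝔄]
variable {X : Type} [NormedAddCommGroup X] [NormedSpace ℂ X] [CompleteSpace X]

namespace HilbertModuleStr

variable (H : HilbertModuleStr 𝔄 X)

theorem inner_self_eq_zero_iff {x : X} : H.inner x x = 0 ↔ x = 0 := by
  rw [← norm_eq_zero, ← norm_eq_zero (a := x), ← sq_eq_zero_iff (M₀ := ℝ) (a := ‖x‖),
    H.norm_inner]

open MulOpposite in
theorem norm_inner_le (x y : X) : ‖H.inner x y‖ ≤ ‖x‖ * ‖y‖ := by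
  let _ : PartialOrder 𝔄ᵐᵒᵖ := CStarAlgebra.spectralOrder _
  have _ : StarOrderedRing 𝔄ᵐᵒᵖ := CStarAlgebra.spectralOrderedRing _
  let _ : SMul 𝔄ᵐᵒᵖ X := ⟨fun α x => H.smul x α.unop⟩
  -- Mathlib's Hilbert C⋆-modules are left modules: `X` is one over `𝔄ᵐᵒᵖ`.
  let _ : CStarModule 𝔄ᵐᵒᵖ X :=
    { inner := fun x y => op (H.inner x y)
      inner_add_right := fun {x y z} => congrArg op (H.inner_add_right x y z)
      inner_self_nonneg := fun {x} => by
        obtain ⟨b, hb⟩ := H.inner_pos x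
        show 0 ≤ op (H.inner x x)
        rw [hb, op_mul, op_star]
        exact mul_star_self_nonneg (op b)
      inner_self := fun {_} => op_eq_zero_iff _ |>.trans H.inner_self_eq_zero_iff
      inner_op_smul_right := fun {α x y} => congrArg op (H.inner_smul_right x y α.unop)
      inner_smul_right_complex := fun {c x y} => congrArg op (H.inner_smulC_right c x y)
      star_inner := fun x y => congrArg op (H.inner_star x y)
      norm_eq_sqrt_norm_inner_self := fun x => by
        show ‖x‖ = √‖op (H.inner x x)‖
        rw [norm_op, ← H.norm_inner, Real.sqrt_sq (norm_nonneg x)] }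
  exact CStarModule.norm_inner_le (A := 𝔄ᵐᵒᵖ) X

theorem ext_inner_left {u v : X} (h : ∀ z, H.inner z u = H.inner z v) : u = v := by
  rw [← sub_eq_zero, ← H.inner_self_eq_zero_iff, H.inner_sub_right, h, sub_self]

theorem ext_inner_right {u v : X} (h : ∀ z, H.inner u z = H.inner v z) : u = v :=
  H.ext_inner_left fun z => by rw [← H.inner_star u, ← H.inner_star v, h]

theorem continuous_inner_left (z : X) : Continuous fun w => H.inner w z :=
  AddMonoidHomClass.continuous_of_bound
    (AddMonoidHom.mk' (fun w => H.inner w z) fun x y => H.inner_add_left x y z) ‖z‖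
    fun w => (H.norm_inner_le w z).trans_eq (mul_comm _ _)

theorem continuous_inner_right (z : X) : Continuous fun w => H.inner z w := by
  simpa only [H.inner_star] using (H.continuous_inner_left z).star

theorem norm_smul_le (x : X) (α : 𝔄) : ‖H.smul x α‖ ≤ ‖x‖ * ‖α‖ := by
  refine (pow_le_pow_iff_left₀ (norm_nonneg _) (by positivity) two_ne_zero).1 ?_
  calc ‖H.smul x α‖ ^ 2 = ‖star α * (H.inner x x * α)‖ := by
        rw [H.norm_inner, H.inner_smul_left, H.inner_smul_right]
    _ ≤ ‖α‖ * (‖H.inner x x‖ * ‖α‖) := norm_mul_le_of_le (norm_star α).le (norm_mul_le _ _)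
    _ = (‖x‖ * ‖α‖) ^ 2 := by rw [← H.norm_inner]; ring

theorem continuous_smul (α : 𝔄) : Continuous fun x => H.smul x α :=
  AddMonoidHomClass.continuous_of_bound
    (AddMonoidHom.mk' (fun x => H.smul x α) fun x y => H.add_smul x y α) ‖α‖
    fun x => (H.norm_smul_le x α).trans_eq (mul_comm _ _)

end HilbertModuleStr

namespace Adj

variable {H : HilbertModuleStr 𝔄 X}

theorem map_add (T : Adj H) (x y : X) : T.toFun (x + y) = T.toFun x + T.toFun y :=
  H.ext_inner_right fun z => by
    rw [T.inner_adj, H.inner_add_left, H.inner_add_left, T.inner_adj, T.inner_adj]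

theorem map_smul (T : Adj H) (c : ℂ) (x : X) : T.toFun (c • x) = c • T.toFun x :=
  H.ext_inner_right fun z => by
    rw [T.inner_adj, H.inner_smulC_left, H.inner_smulC_left, T.inner_adj]

theorem continuous_toFun (T : Adj H) : Continuous T.toFun := by
  let g : X →ₗ[ℂ] X := ⟨⟨T.toFun, T.map_add⟩, T.map_smul⟩
  refine g.continuous_of_seq_closed_graph fun u x y hu hTu => H.ext_inner_right fun z => ?_
  -- both sides are the limit of `⟪T uₙ, z⟫ = ⟪uₙ, T† z⟫`
  have h₁ := ((H.continuous_inner_left z).tendsto y).comp hTu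
  have h₂ := ((H.continuous_inner_left (T.adjFun z)).tendsto x).comp hu
  simp only [Function.comp_def, g, LinearMap.coe_mk, AddHom.coe_mk, T.inner_adj] at h₁ h₂
  rw [tendsto_nhds_unique h₁ h₂]
  exact (T.inner_adj x z).symm

theorem ext_of_toFun {S T : Adj H} (h : S.toFun = T.toFun) : S = T :=
  ext' h <| funext fun y => H.ext_inner_left fun x => by
    rw [← S.inner_adj, ← T.inner_adj, h]

end Adj

namespace GNSModel

variable {A : Type} [NonUnitalCStarAlgebra A] {S : CStarAction 𝔄 A} {τ : A → 𝔄}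
variable (M : GNSModel 𝔄 X S τ)

theorem hat_sub (a b : A) : M.hat (a - b) = M.hat a - M.hat b :=
  (AddMonoidHom.mk' M.hat M.hat_add).map_sub a b

theorem rreg_mem_commutant (a : A) : M.rreg a ∈ Commutant (Set.range M.lreg) := by
  rintro _ ⟨b, rfl⟩
  refine Adj.ext_of_toFun <| M.dense_hat.equalizer (Adj.continuous_toFun _)
    (Adj.continuous_toFun _) (funext fun c => ?_)
  show (M.rreg a).toFun ((M.lreg b).toFun (M.hat c))
    = (M.lreg b).toFun ((M.rreg a).toFun (M.hat c))
  rw [M.lreg_spec, M.rreg_spec, M.rreg_spec, M.lreg_spec, mul_assoc]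

section Tracial

variable (htr : ∀ a b : A, τ (a * b) = τ (b * a))
include htr

theorem norm_hat_star (a : A) : ‖M.hat (star a)‖ = ‖M.hat a‖ := by
  refine (pow_left_inj₀ (norm_nonneg _) (norm_nonneg _) two_ne_zero).1 ?_
  rw [M.toH.norm_inner, M.toH.norm_inner, M.inner_hat, M.inner_hat, star_star, htr]

theorem exists_conj : ∃ J : X → X, Continuous J ∧ ∀ a, J (M.hat a) = M.hat (star a) :=
  M.dense_hat.exists_continuous_extend_of_dist_le fun a b => by
    rw [dist_eq_norm, dist_eq_norm, ← hat_sub, ← hat_sub, ← star_sub, M.norm_hat_star htr]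

end Tracial

section Conj

variable {J : X → X} (hJc : Continuous J) (hJ : ∀ a, J (M.hat a) = M.hat (star a))
include hJc hJ

theorem conj_add (x y : X) : J (x + y) = J x + J y :=
  M.dense_hat.induction_on₂ (isClosed_eq (by fun_prop) (by fun_prop))
    (fun a b => by rw [← M.hat_add, hJ, hJ, hJ, star_add, M.hat_add]) x y

theorem conj_smul (c : ℂ) (x : X) : J (c • x) = (starRingEnd ℂ) c • J x :=
  M.dense_hat.induction_on x (isClosed_eq (by fun_prop) (by fun_prop)) fun a => by
    rw [← M.hat_smulC, hJ, hJ, star_smul, M.hat_smulC, Complex.star_def]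

theorem conj_lact (α : 𝔄) (x : X) : J (M.lact α x) = M.toH.smul (J x) (star α) :=
  M.dense_hat.induction_on x
    (isClosed_eq (hJc.comp (M.lactAdj α).continuous_toFun) ((M.toH.continuous_smul _).comp hJc))
    fun a => by rw [M.lact_hat, hJ, hJ, ← M.hat_act, CStarAction.lact, star_star]

theorem conj_smul_right (x : X) (α : 𝔄) : J (M.toH.smul x α) = M.lact (star α) (J x) :=
  M.dense_hat.induction_on x
    (isClosed_eq (hJc.comp (M.toH.continuous_smul α)) ((M.lactAdj _).continuous_toFun.comp hJc))
    fun a => by rw [← M.hat_act, hJ, hJ, M.lact_hat, CStarAction.lact, star_star, star_star]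

theorem conj_conj (x : X) : J (J x) = x :=
  M.dense_hat.induction_on x (isClosed_eq (hJc.comp hJc) continuous_id) fun a => by
    rw [hJ, hJ, star_star]

theorem conj_lreg_conj (a : A) (x : X) :
    J ((M.lreg a).toFun (J x)) = (M.rreg (star a)).toFun x :=
  M.dense_hat.induction_on x
    (isClosed_eq (hJc.comp ((M.lreg a).continuous_toFun.comp hJc))
      (M.rreg (star a)).continuous_toFun)
    fun b => by rw [hJ, M.lreg_spec, hJ, M.rreg_spec, star_mul, star_star]

theorem inner_conj_comm (htr : ∀ a b : A, τ (a * b) = τ (b * a)) (z z' : X) :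
    M.toH.inner (J z) z' = M.toH.inner (J z') z := by
  have hcont : ∀ y, Continuous fun x => M.toH.inner (J x) y := fun y =>
    (M.toH.continuous_inner_left y).comp hJc
  refine M.dense_hat.induction_on z' (isClosed_eq (M.toH.continuous_inner_right _) (hcont z))
    fun b => ?_
  refine M.dense_hat.induction_on z (isClosed_eq (hcont _) (M.toH.continuous_inner_right _))
    fun a => ?_
  rw [hJ, hJ, M.inner_hat, M.inner_hat, star_star, star_star, htr]

end Conj

end GNSModel

theorem trace_commutation_and_conjugation_general
    {𝔄 A : Type} [NonUnitalCStarAlgebra 𝔄] [NonUnitalCStarAlgebra A]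
    {X : Type} [NormedAddCommGroup X] [NormedSpace ℂ X] [CompleteSpace X]
    (S : CStarAction 𝔄 A) (τ : A → 𝔄) (hτ : IsATrace S τ)
    (M : GNSModel 𝔄 X S τ) :
    (∀ a : A, M.rreg a ∈ Commutant (Set.range M.lreg)) ∧
    ∃ J : X → X,
      Continuous J ∧
      (∀ x y : X, J (x + y) = J x + J y) ∧
      (∀ (c : ℂ) (x : X), J (c • x) = (starRingEnd ℂ c) • J x) ∧
      (∀ (α : 𝔄) (x : X), J (M.lact α x) = M.toH.smul (J x) (star α)) ∧
      (∀ (x : X) (α : 𝔄), J (M.toH.smul x α) = M.lact (star α) (J x)) ∧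
      (∀ x : X, J (J x) = x) ∧
      (∀ a : A, J (M.hat a) = M.hat (star a)) ∧
      (∀ (a : A) (x : X), J ((M.lreg a).toFun (J x)) = (M.rreg (star a)).toFun x) ∧
      (∀ z z' : X, M.toH.inner (J z) z' = M.toH.inner (J z') z) := by
  obtain ⟨J, hJc, hJ⟩ := M.exists_conj hτ.tracial
  exact ⟨M.rreg_mem_commutant, J, hJc, M.conj_add hJc hJ, M.conj_smul hJc hJ,
    M.conj_lact hJc hJ, M.conj_smul_right hJc hJ, M.conj_conj hJc hJ, hJ,
    M.conj_lreg_conj hJc hJ, M.inner_conj_comm hJc hJ hτ.tracial⟩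

/-- Let `τ : A → 𝔄` be an `𝔄`-trace with non degenerate action. Then
(i) `π_τ^op(A^op) ⊆ π_τ(A)'` in `B(L²(A,τ))`; and (ii) there is a conjugate-linear
`𝔄`-morphism `J` on `L²(A,τ)` with `J² = id`, `J(â) = (a*)^`, `J π_τ(a) J = π_τ^op(a*)`,
and `⟨Jz, z'⟩ = ⟨Jz', z⟩`. -/
theorem trace_commutation_and_conjugation
    {𝔄 A : Type} [NonUnitalCStarAlgebra 𝔄] [NonUnitalCStarAlgebra A]
    {X : Type} [NormedAddCommGroup X] [NormedSpace ℂ X] [CompleteSpace X]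
    (S : CStarAction 𝔄 A) (τ : A → 𝔄) (hτ : IsATrace S τ) (hnd : S.NonDegenerate)
    (M : GNSModel 𝔄 X S τ) :
    (∀ a : A, M.rreg a ∈ Commutant (Set.range M.lreg)) ∧
    ∃ J : X → X,
      Continuous J ∧
      (∀ x y : X, J (x + y) = J x + J y) ∧
      (∀ (c : ℂ) (x : X), J (c • x) = (starRingEnd ℂ c) • J x) ∧
      (∀ (α : 𝔄) (x : X), J (M.lact α x) = M.toH.smul (J x) (star α)) ∧
      (∀ (x : X) (α : 𝔄), J (M.toH.smul x α) = M.lact (star α) (J x)) ∧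
      (∀ x : X, J (J x) = x) ∧
      (∀ a : A, J (M.hat a) = M.hat (star a)) ∧
      (∀ (a : A) (x : X), J ((M.lreg a).toFun (J x)) = (M.rreg (star a)).toFun x) ∧
      (∀ z z' : X, M.toH.inner (J z) z' = M.toH.inner (J z') z) :=
  trace_commutation_and_conjugation_general S τ hτ M
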